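/- For all positive integers p, (2p-1) · ∑_{j=0}^{2p+1} (-1)^j C(2p+1, j) C(2p-2, 2p+1-j) = (-1)^p (3-2p) C(2p-1, p), where the left-hand sum is the coefficient of z^{2p+1} in (1-z)^{2p+1}(1+z)^{2p-2}, which equals (-1)^p ( -3 C(2p-2, p) + C(2p-2, p-1) ). -/
import Mathlib


open Polynomial

lemma coeff_one_sub_X_pow (n k : ℕ) :
    ((1 - X : ℤ[X]) ^ n).coeff k = (-1 : ℤ) ^ k * n.choose k := by
  have h : (1 - X : ℤ[X]) ^ n = C ((-1 : ℤ) ^ n) * (X + C (-1)) ^ n := by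
    rw [map_pow, ← mul_pow]
    congr 1
    simp only [map_neg, map_one]
    ring
  rw [h, coeff_C_mul, coeff_X_add_C_pow]
  by_cases hk : k ≤ n
  · have : (-1 : ℤ) ^ n * (-1) ^ (n - k) = (-1) ^ k := by
      rw [← pow_add]
      have h2 : n + (n - k) = 2 * (n - k) + k := by omega
      rw [h2, pow_add, pow_mul]
      simp
    rw [← mul_assoc, this]
  · rw [Nat.choose_eq_zero_of_lt (by omega)]
    simp

theorem stmt_13 (p : ℕ) (hp : 0 < p) :
    (2 * (p : ℤ) - 1) *
        (∑ j ∈ Finset.range (2 * p + 2),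
          (-1 : ℤ) ^ j * ((2 * p + 1).choose j) * ((2 * p - 2).choose (2 * p + 1 - j))) =
      (-1) ^ p * (3 - 2 * (p : ℤ)) * ((2 * p - 1).choose p) ∧
    (∑ j ∈ Finset.range (2 * p + 2),
        (-1 : ℤ) ^ j * ((2 * p + 1).choose j) * ((2 * p - 2).choose (2 * p + 1 - j))) =
      ((1 - X : ℤ[X]) ^ (2 * p + 1) * (1 + X) ^ (2 * p - 2)).coeff (2 * p + 1) ∧
    ((1 - X : ℤ[X]) ^ (2 * p + 1) * (1 + X) ^ (2 * p - 2)).coeff (2 * p + 1) =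
      (-1) ^ p * (-3 * ((2 * p - 2).choose p : ℤ) + ((2 * p - 2).choose (p - 1) : ℤ)) := by
  obtain ⟨q, rfl⟩ := Nat.exists_eq_succ_of_ne_zero hp.ne'
  simp only [Nat.succ_eq_add_one] at *
  have e1 : 2 * (q + 1) - 2 = 2 * q := by omega
  have e2 : 2 * (q + 1) - 1 = 2 * q + 1 := by omega
  have e3 : q + 1 - 1 = q := by omega
  have e4 : 2 * (q + 1) + 1 = 2 * q + 3 := by omega
  have e5 : 2 * (q + 1) + 2 = 2 * q + 4 := by omega
  simp only [e1, e2, e3, e4, e5]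
  set E : ℤ[X] := expand ℤ 2 ((1 - X) ^ (2 * q)) with hEdef
  have hE : ∀ n, E.coeff n =
      if 2 ∣ n then (-1 : ℤ) ^ (n / 2) * (2 * q).choose (n / 2) else 0 := by
    intro n
    rw [hEdef, coeff_expand (by norm_num)]
    split_ifs with h
    · rw [coeff_one_sub_X_pow]
    · rfl
  have key : (1 - X : ℤ[X]) ^ (2 * q + 3) * (1 + X) ^ (2 * q) = (1 - X) ^ 3 * E := by
    rw [hEdef, map_pow, map_sub, map_one, expand_X]
    have h12 : (1 - X ^ 2 : ℤ[X]) = (1 - X) * (1 + X) := by ring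
    rw [h12, mul_pow]
    ring
  have c0 : E.coeff (2 * q + 3) = 0 := by rw [hE, if_neg (by omega)]
  have c1 : (E * X).coeff (2 * q + 3) = (-1 : ℤ) ^ (q + 1) * (2 * q).choose (q + 1) := by
    rw [show 2 * q + 3 = 2 * q + 2 + 1 from by omega, coeff_mul_X, hE, if_pos (by omega),
      show (2 * q + 2) / 2 = q + 1 from by omega]
  have c2 : (E * X ^ 2).coeff (2 * q + 3) = 0 := by
    rw [show 2 * q + 3 = 2 * q + 1 + 2 from by omega, coeff_mul_X_pow, hE, if_neg (by omega)]
  have c3 : (E * X ^ 3).coeff (2 * q + 3) = (-1 : ℤ) ^ q * (2 * q).choose q := by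
    rw [show 2 * q + 3 = 2 * q + 3 from rfl, coeff_mul_X_pow, hE, if_pos (by omega),
      show (2 * q) / 2 = q from by omega]
  have hC3 : (C (3 : ℤ) : ℤ[X]) = 3 := by norm_num
  have hsplit : (1 - X : ℤ[X]) ^ 3 * E = E - C 3 * (E * X) + C 3 * (E * X ^ 2) - E * X ^ 3 := by
    rw [hC3]; ring
  have h3 : ((1 - X : ℤ[X]) ^ (2 * q + 3) * (1 + X) ^ (2 * q)).coeff (2 * q + 3) =
      (-1 : ℤ) ^ (q + 1) * (-3 * ((2 * q).choose (q + 1) : ℤ) + ((2 * q).choose q : ℤ)) := by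
    rw [key, hsplit, coeff_sub, coeff_add, coeff_sub, coeff_C_mul, coeff_C_mul, c0, c1, c2, c3]
    simp only [pow_succ]
    ring
  have h2 : (∑ j ∈ Finset.range (2 * q + 4),
        (-1 : ℤ) ^ j * ((2 * q + 3).choose j) * ((2 * q).choose (2 * q + 3 - j))) =
      ((1 - X : ℤ[X]) ^ (2 * q + 3) * (1 + X) ^ (2 * q)).coeff (2 * q + 3) := by
    rw [coeff_mul, Finset.Nat.sum_antidiagonal_eq_sum_range_succ_mk]
    refine Finset.sum_congr (by norm_num) fun j hj => ?_
    rw [coeff_one_sub_X_pow, coeff_one_add_X_pow]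
  refine ⟨?_, h2, h3⟩
  rw [h2, h3]
  have hA : ((2 * q).choose (q + 1) : ℤ) * (q + 1) = ((2 * q).choose q : ℤ) * q := by
    have := Nat.choose_succ_right_eq (2 * q) q
    rw [show 2 * q - q = q from by omega] at this
    exact_mod_cast this
  have hP : ((2 * q + 1).choose (q + 1) : ℤ) = (2 * q).choose q + (2 * q).choose (q + 1) := by
    exact_mod_cast congrArg (Nat.cast : ℕ → ℤ) (Nat.choose_succ_succ (2 * q) q)
  rw [hP]
  push_cast
  linear_combination ((-4 : ℤ) * (-1) ^ (q + 1)) * hA
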